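/- arXiv:1312.4326 — 4 statements merged into one kernel-verified Lean document; each statement's English description precedes it below -/
import Mathlib

section
/- Let F be an algebraically closed field of characteristic 0, let n ≥ 2, let V be an n-dimensional F-vector space, and let ξ ∈ F be a primitive n-th root of unity. Suppose x, y ∈ End_F(V) satisfy det x = det y = 1 and x y = ξ y x. Then x^n = y^n = 1_V if n is odd and x^n = y^n = −1_V if n is even, and the pair (x, y) is unique up to simultaneous conjugation: if x', y' ∈ End_F(V) is another pair with det x' = det y' = 1 and x' y' = ξ y' x', then there exists g ∈ GL(V) with g x g⁻¹ = x' and g y g⁻¹ = y'. -/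
/-!
If `x v = μ v`, the relation `x y = ξ y x` makes `y ^ k v` an eigenvector of `x` with
eigenvalue `ξ ^ k μ`. For `k < n` these eigenvalues are distinct, so the `y ^ k v` form an
eigenbasis of `x`, and `1 = det x = ξ ^ (n (n - 1) / 2) μ ^ n = (-1) ^ (n - 1) μ ^ n`.
Hence `x ^ n = μ ^ n = (-1) ^ (n - 1)`, and every `n`-th root of `(-1) ^ (n - 1)` is an
eigenvalue of `x`; the same holds for `y`, since `y x = ξ⁻¹ x y`. For uniqueness fix such a
root `l` and a `y`-eigenvector `w` for it: in the basis `x ^ k w` the map `x` is the cyclic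
shift closed up by `x ^ n = (-1) ^ (n - 1)` and `y` is diagonal with entries `ξ ^ (-k) l`, so
two such pairs have the same matrices.
-/

open Module

theorem IsPrimitiveRoot.prod_range_pow {R : Type*} [CommRing R] [IsDomain R] {q : R} {n : ℕ}
    (hq : IsPrimitiveRoot q n) : ∏ k ∈ Finset.range n, q ^ k = (-1) ^ (n - 1) := by
  have hsum := Finset.sum_range_id_mul_two n
  rw [Finset.prod_pow_eq_pow_sum]
  rcases Nat.even_or_odd' n with ⟨m, rfl | rfl⟩
  · rcases Nat.eq_zero_or_pos m with rfl | hm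
    · simp
    have hqm : q ^ m = -1 := by
      have h2 := hq.pow_of_dvd hm.ne' (dvd_mul_left m 2)
      rw [Nat.mul_div_cancel _ hm] at h2
      exact h2.eq_neg_one_of_two_right
    have : ∑ i ∈ Finset.range (2 * m), i = m * (2 * m - 1) := by
      apply Nat.eq_of_mul_eq_mul_right two_pos
      rw [hsum]; ring
    rw [this, pow_mul, hqm]
  · have : ∑ i ∈ Finset.range (2 * m + 1), i = (2 * m + 1) * m := by
      apply Nat.eq_of_mul_eq_mul_right two_pos
      rw [hsum]; simp; ring
    rw [this, pow_mul, hq.pow_eq_one, one_pow, Nat.add_sub_cancel, pow_mul]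
    simp

theorem LinearMap.injective_of_det_ne_zero {K V : Type*} [Field K] [AddCommGroup V]
    [Module K V] [FiniteDimensional K V] {f : Module.End K V} (hf : LinearMap.det f ≠ 0) :
    Function.Injective f :=
  LinearMap.ker_eq_bot.mp ((f.not_hasEigenvalue_zero_tfae.out 3 4).mp hf)

namespace Module.End

section QCommute

variable {K V : Type*} [Field K] [AddCommGroup V] [Module K V] {f g : End K V} {q μ : K}
  {v : V}

theorem mul_eq_inv_smul_mul (hq : q ≠ 0) (h : f * g = q • (g * f)) :
    g * f = q⁻¹ • (f * g) := by
  rw [h, smul_smul, inv_mul_cancel₀ hq, one_smul]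

theorem mul_pow_eq_smul_pow_mul (h : f * g = q • (g * f)) (k : ℕ) :
    f * g ^ k = q ^ k • (g ^ k * f) := by
  induction k with
  | zero => simp
  | succ k ih =>
    rw [pow_succ, ← mul_assoc, ih, smul_mul_assoc, mul_assoc, h, mul_smul_comm, smul_smul,
      ← mul_assoc, ← pow_succ, ← pow_succ]

theorem apply_pow_apply_eq_smul (h : f * g = q • (g * f)) (hv : f v = μ • v) (k : ℕ) :
    f ((g ^ k) v) = (q ^ k * μ) • (g ^ k) v := by
  rw [← mul_apply, mul_pow_eq_smul_pow_mul h, LinearMap.smul_apply, mul_apply, hv, map_smul,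
    smul_smul]

theorem hasEigenvector_pow_apply (h : f * g = q • (g * f))
    (hg : Function.Injective g) (hv : f.HasEigenvector μ v) (k : ℕ) :
    f.HasEigenvector (q ^ k * μ) ((g ^ k) v) := by
  refine ⟨mem_eigenspace_iff.mpr (apply_pow_apply_eq_smul h hv.apply_eq_smul k),
    fun h0 => hv.2 ?_⟩
  refine (hg.iterate k) ?_
  rw [← Module.End.pow_apply, h0, Function.iterate_fixed (map_zero g)]

variable {n : ℕ}

theorem linearIndependent_pow_apply (hq : IsPrimitiveRoot q n)
    (h : f * g = q • (g * f)) (hg : Function.Injective g) (hv : f.HasEigenvector μ v)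
    (hμ : μ ≠ 0) : LinearIndependent K (fun k : Fin n => (g ^ (k : ℕ)) v) :=
  f.eigenvectors_linearIndependent' (fun k : Fin n => q ^ (k : ℕ) * μ)
    (fun i j hij => Fin.ext (hq.pow_inj i.2 j.2 (mul_right_cancel₀ hμ hij))) _
    (fun k => hasEigenvector_pow_apply h hg hv k)

theorem hasEigenvalue_of_pow_eq_pow [NeZero n] (hq : IsPrimitiveRoot q n)
    (h : f * g = q • (g * f)) (hg : Function.Injective g) (hv : f.HasEigenvector μ v)
    (hμ : μ ≠ 0) {ν : K} (hν : ν ^ n = μ ^ n) : f.HasEigenvalue ν := by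
  obtain ⟨i, -, hi⟩ := hq.eq_pow_of_pow_eq_one (ξ := ν / μ)
    (by rw [div_pow, hν, div_self (pow_ne_zero _ hμ)])
  convert hasEigenvalue_of_hasEigenvector (hasEigenvector_pow_apply h hg hv i)
  rw [hi, div_mul_cancel₀ _ hμ]

theorem mul_eq_mul_of_map_pow_apply_of_apply_eq_smul {x x' y y' E : End K V} {w w' : V}
    {l : K} (b : Basis (Fin n) K V) (hb : ∀ k, b k = (x ^ (k : ℕ)) w)
    (hE : ∀ k : Fin n, E ((x ^ (k : ℕ)) w) = (x' ^ (k : ℕ)) w')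
    (h : y * x = q • (x * y)) (h' : y' * x' = q • (x' * y'))
    (hw : y w = l • w) (hw' : y' w' = l • w') : E * y = y' * E := by
  refine b.ext fun k => ?_
  rw [mul_apply, mul_apply, hb, apply_pow_apply_eq_smul h hw, map_smul, hE,
    apply_pow_apply_eq_smul h' hw']

theorem mul_eq_mul_of_map_pow_apply {x x' E : End K V} {w w' : V} {c : K}
    (b : Basis (Fin n) K V) (hb : ∀ k, b k = (x ^ (k : ℕ)) w)
    (hE : ∀ k : Fin n, E ((x ^ (k : ℕ)) w) = (x' ^ (k : ℕ)) w')
    (hx : x ^ n = c • 1) (hx' : x' ^ n = c • 1) : E * x = x' * E := by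
  refine b.ext fun k => ?_
  rw [mul_apply, mul_apply, hb, hE, ← mul_apply x, ← mul_apply x', ← pow_succ', ← pow_succ']
  rcases (show (k : ℕ) + 1 ≤ n from k.2).lt_or_eq with hk | hk
  · exact hE ⟨k + 1, hk⟩
  · have h0 := hE ⟨0, k.pos⟩
    simp only [pow_zero, one_apply] at h0
    rw [hk, hx, hx', LinearMap.smul_apply, LinearMap.smul_apply, one_apply, one_apply, map_smul,
      h0]

variable [FiniteDimensional K V]

theorem exists_basis_pow_apply (hdim : finrank K V = n) (hq : IsPrimitiveRoot q n)
    (h : f * g = q • (g * f)) (hg : Function.Injective g) (hv : f.HasEigenvector μ v)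
    (hμ : μ ≠ 0) : ∃ b : Basis (Fin n) K V, ∀ k, b k = (g ^ (k : ℕ)) v :=
  ⟨basisOfLinearIndependentOfCardEqFinrank' _ (linearIndependent_pow_apply hq h hg hv hμ)
    (by simp [hdim]), by simp⟩

theorem det_eq_neg_one_pow_mul_pow (hdim : finrank K V = n)
    (hq : IsPrimitiveRoot q n) (h : f * g = q • (g * f)) (hg : Function.Injective g)
    (hv : f.HasEigenvector μ v) (hμ : μ ≠ 0) :
    LinearMap.det f = (-1) ^ (n - 1) * μ ^ n := by
  obtain ⟨b, hb⟩ := exists_basis_pow_apply hdim hq h hg hv hμ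
  have hf : f = Matrix.toLin b b (Matrix.diagonal fun k => q ^ (k : ℕ) * μ) :=
    b.ext fun k => by
      rw [Matrix.toLin_self, hb, apply_pow_apply_eq_smul h hv.apply_eq_smul]
      simp [Matrix.diagonal_apply, hb]
  rw [hf, LinearMap.det_toLin, Matrix.det_diagonal, Finset.prod_mul_distrib, Finset.prod_const,
    Fin.prod_univ_eq_prod_range (q ^ ·), hq.prod_range_pow, Finset.card_univ, Fintype.card_fin]

theorem pow_eq_smul_one (hdim : finrank K V = n)
    (hq : IsPrimitiveRoot q n) (h : f * g = q • (g * f)) (hg : Function.Injective g)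
    (hv : f.HasEigenvector μ v) (hμ : μ ≠ 0) : f ^ n = μ ^ n • 1 := by
  obtain ⟨b, hb⟩ := exists_basis_pow_apply hdim hq h hg hv hμ
  refine b.ext fun k => ?_
  rw [hb, (hasEigenvector_pow_apply h hg hv k).pow_apply, mul_pow, ← pow_mul, mul_comm (k : ℕ),
    pow_mul, hq.pow_eq_one, one_pow, one_mul]
  rfl

end QCommute

section AlgClosed

variable {K V : Type*} [Field K] [IsAlgClosed K] [AddCommGroup V] [Module K V]
  [FiniteDimensional K V] {f g : End K V} {q : K} {n : ℕ}

theorem exists_hasEigenvector_pow_eq (hn : 0 < n) (hdim : finrank K V = n)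
    (hq : IsPrimitiveRoot q n) (h : f * g = q • (g * f)) (hf : LinearMap.det f = 1)
    (hg : LinearMap.det g ≠ 0) :
    ∃ μ v, f.HasEigenvector μ v ∧ μ ≠ 0 ∧ μ ^ n = (-1) ^ (n - 1) := by
  have : Nontrivial V := Module.nontrivial_of_finrank_pos (R := K) (hdim ▸ hn)
  obtain ⟨μ, hμ⟩ := exists_eigenvalue f
  obtain ⟨v, hv⟩ := hμ.exists_hasEigenvector
  have hμ0 : μ ≠ 0 := by
    rintro rfl
    have hf0 : ¬f.HasEigenvalue 0 := (f.not_hasEigenvalue_zero_tfae.out 0 3).mpr (by simp [hf])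
    exact hf0 hμ
  have hdet := det_eq_neg_one_pow_mul_pow hdim hq h (LinearMap.injective_of_det_ne_zero hg) hv hμ0
  have hsq : ((-1 : K) ^ (n - 1)) * (-1) ^ (n - 1) = 1 := by
    rw [← mul_pow, neg_one_mul, neg_neg, one_pow]
  refine ⟨μ, v, hv, hμ0, ?_⟩
  linear_combination (-(-1 : K) ^ (n - 1)) * hdet + (-1) ^ (n - 1) * hf - μ ^ n * hsq

theorem pow_eq_neg_one_pow_smul_one (hn : 0 < n) (hdim : finrank K V = n)
    (hq : IsPrimitiveRoot q n) (h : f * g = q • (g * f)) (hf : LinearMap.det f = 1)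
    (hg : LinearMap.det g ≠ 0) : f ^ n = (-1 : K) ^ (n - 1) • 1 := by
  obtain ⟨μ, v, hv, hμ0, hμ⟩ := exists_hasEigenvector_pow_eq hn hdim hq h hf hg
  rw [pow_eq_smul_one hdim hq h (LinearMap.injective_of_det_ne_zero hg) hv hμ0, hμ]

theorem hasEigenvalue_of_pow_eq_neg_one_pow (hn : 0 < n) (hdim : finrank K V = n)
    (hq : IsPrimitiveRoot q n) (h : f * g = q • (g * f)) (hf : LinearMap.det f = 1)
    (hg : LinearMap.det g ≠ 0) {ν : K} (hν : ν ^ n = (-1) ^ (n - 1)) : f.HasEigenvalue ν := by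
  obtain ⟨μ, v, hv, hμ0, hμ⟩ := exists_hasEigenvector_pow_eq hn hdim hq h hf hg
  have : NeZero n := ⟨hn.ne'⟩
  exact hasEigenvalue_of_pow_eq_pow hq h (LinearMap.injective_of_det_ne_zero hg) hv hμ0
    (hν.trans hμ.symm)

theorem exists_basis_pow_apply_of_pow_eq_neg_one_pow (hn : 0 < n) (hdim : finrank K V = n)
    (hq : IsPrimitiveRoot q n) {x y : End K V} (hx : LinearMap.det x = 1)
    (hy : LinearMap.det y = 1) (h : x * y = q • (y * x)) {l : K}
    (hl : l ^ n = (-1) ^ (n - 1)) :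
    ∃ (w : V) (b : Basis (Fin n) K V), y w = l • w ∧ ∀ k, b k = (x ^ (k : ℕ)) w := by
  have hyx := mul_eq_inv_smul_mul (hq.ne_zero hn.ne') h
  have hxinj := LinearMap.injective_of_det_ne_zero (hx ▸ one_ne_zero)
  have hl0 : l ≠ 0 := by
    rintro rfl
    rw [zero_pow hn.ne'] at hl
    exact pow_ne_zero _ (neg_ne_zero.mpr one_ne_zero) hl.symm
  obtain ⟨w, hw⟩ := (hasEigenvalue_of_pow_eq_neg_one_pow hn hdim hq.inv hyx hy
    (hx ▸ one_ne_zero) hl).exists_hasEigenvector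
  obtain ⟨b, hb⟩ := exists_basis_pow_apply hdim hq.inv hyx hxinj hw hl0
  exact ⟨w, b, hw.apply_eq_smul, hb⟩

theorem exists_units_conj_eq_of_mul_eq_smul_mul (hn : 0 < n) (hdim : finrank K V = n)
    (hq : IsPrimitiveRoot q n) {x y x' y' : End K V} (hx : LinearMap.det x = 1)
    (hy : LinearMap.det y = 1) (h : x * y = q • (y * x)) (hx' : LinearMap.det x' = 1)
    (hy' : LinearMap.det y' = 1) (h' : x' * y' = q • (y' * x')) :
    ∃ u : (End K V)ˣ, ↑u * x * ↑u⁻¹ = x' ∧ ↑u * y * ↑u⁻¹ = y' := by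
  obtain ⟨l, hl⟩ := IsAlgClosed.exists_pow_nat_eq ((-1 : K) ^ (n - 1)) hn
  obtain ⟨w, b, hw, hb⟩ := exists_basis_pow_apply_of_pow_eq_neg_one_pow hn hdim hq hx hy h hl
  obtain ⟨w', b', hw', hb'⟩ :=
    exists_basis_pow_apply_of_pow_eq_neg_one_pow hn hdim hq hx' hy' h' hl
  set E := b.equiv b' (Equiv.refl _)
  have hE (k : Fin n) : E ((x ^ (k : ℕ)) w) = (x' ^ (k : ℕ)) w' := by
    rw [← hb, ← hb', Basis.equiv_apply, Equiv.refl_apply]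
  refine ⟨(LinearMap.GeneralLinearGroup.generalLinearEquiv K V).symm E, ?_, ?_⟩ <;>
    rw [Units.mul_inv_eq_iff_eq_mul]
  · exact mul_eq_mul_of_map_pow_apply b hb hE
      (pow_eq_neg_one_pow_smul_one hn hdim hq h hx (hy ▸ one_ne_zero))
      (pow_eq_neg_one_pow_smul_one hn hdim hq h' hx' (hy' ▸ one_ne_zero))
  · have hq0 := hq.ne_zero hn.ne'
    exact mul_eq_mul_of_map_pow_apply_of_apply_eq_smul b hb hE
      (mul_eq_inv_smul_mul hq0 h) (mul_eq_inv_smul_mul hq0 h') hw hw'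

end AlgClosed

end Module.End

theorem stmt12_general (F V : Type) [Field F] [IsAlgClosed F]
    [AddCommGroup V] [Module F V] [FiniteDimensional F V]
    (n : ℕ) (hn : 2 ≤ n) (hdim : Module.finrank F V = n)
    (ξ : F) (hξ : IsPrimitiveRoot ξ n)
    (x y : Module.End F V) (hx : LinearMap.det x = 1) (hy : LinearMap.det y = 1)
    (hcomm : x * y = ξ • (y * x)) :
    (Odd n → x ^ n = 1 ∧ y ^ n = 1) ∧
    (Even n → x ^ n = -1 ∧ y ^ n = -1) ∧
    ∀ x' y' : Module.End F V, LinearMap.det x' = 1 → LinearMap.det y' = 1 →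
      x' * y' = ξ • (y' * x') →
      ∃ g : (Module.End F V)ˣ,
        (g : Module.End F V) * x * (↑g⁻¹ : Module.End F V) = x' ∧
        (g : Module.End F V) * y * (↑g⁻¹ : Module.End F V) = y' := by
  have hn0 : 0 < n := by omega
  have hyx := Module.End.mul_eq_inv_smul_mul (hξ.ne_zero hn0.ne') hcomm
  have hxn := Module.End.pow_eq_neg_one_pow_smul_one hn0 hdim hξ hcomm hx (by simp [hy])
  have hyn := Module.End.pow_eq_neg_one_pow_smul_one hn0 hdim hξ.inv hyx hy (by simp [hx])
  refine ⟨fun hodd => ?_, fun heven => ?_, fun x' y' hx' hy' h' =>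
    Module.End.exists_units_conj_eq_of_mul_eq_smul_mul hn0 hdim hξ hx hy hcomm hx' hy' h'⟩
  · simp [hxn, hyn, (Nat.Odd.sub_odd hodd odd_one).neg_one_pow]
  · simp [hxn, hyn, (Nat.Even.sub_odd hn0 heven odd_one).neg_one_pow]

theorem stmt12 (F V : Type) [Field F] [IsAlgClosed F] [CharZero F]
    [AddCommGroup V] [Module F V] [FiniteDimensional F V]
    (n : ℕ) (hn : 2 ≤ n) (hdim : Module.finrank F V = n)
    (ξ : F) (hξ : IsPrimitiveRoot ξ n)
    (x y : Module.End F V) (hx : LinearMap.det x = 1) (hy : LinearMap.det y = 1)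
    (hcomm : x * y = ξ • (y * x)) :
    (Odd n → x ^ n = 1 ∧ y ^ n = 1) ∧
    (Even n → x ^ n = -1 ∧ y ^ n = -1) ∧
    ∀ x' y' : Module.End F V, LinearMap.det x' = 1 → LinearMap.det y' = 1 →
      x' * y' = ξ • (y' * x') →
      ∃ g : (Module.End F V)ˣ,
        (g : Module.End F V) * x * (↑g⁻¹ : Module.End F V) = x' ∧
        (g : Module.End F V) * y * (↑g⁻¹ : Module.End F V) = y' :=
  stmt12_general F V n hn hdim ξ hξ x y hx hy hcomm
end

section
/- Let F be an algebraically closed field of characteristic 0, let n ≥ 2, and let L = ⊕_{r̄ ∈ ℤ_n} L_{r̄} be a ℤ_n-graded finite-dimensional semisimple Lie algebra over F (so [L_{r̄}, L_{s̄}] ⊆ L_{r̄+s̄}) such that L_0̄ is semisimple and each L_{r̄} with r̄ ≠ 0̄ is an irreducible L_0̄-module under the adjoint action. Let A be an abelian group and let Γ : L = ⊕_{a ∈ A} L_a and Γ' : L = ⊕_{a ∈ A} L'_a be two A-gradings of the Lie algebra L, each of which refines the ℤ_n-grading (every homogeneous component of Γ, and of Γ', is contained in some L_{r̄}), and which agree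 on L_0̄ (L_a ∩ L_0̄ = L'_a ∩ L_0̄ for all a ∈ A). Then Γ and Γ' differ only by shifts on the components of the ℤ_n-grading: for each r̄ ∈ ℤ_n there exists s_{r̄} ∈ A such that L'_a ∩ L_{r̄} = L_{s_{r̄} a} ∩ L_{r̄} for all a ∈ A. In particular, the collection of homogeneous subspaces of Γ is uniquely determined by its restriction to L_0̄. -/
/-!
Write `π a`, `π' a` for the projections of the two `A`-gradings `Γ`, `Γ'`. For `s ∈ A` the operator
`transfer s = ∑ₐ π' (s * a) ∘ π a` commutes with `ad v` whenever `v` is homogeneous of the same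
degree for `Γ` and for `Γ'`. As `Γ` and `Γ'` agree on `L₀`, every element of `L₀` is a sum of such
`v`, so `transfer s` commutes with the adjoint action of `L₀`; it also preserves every `Lᵣ`, hence
acts on the irreducible `L₀`-module `Lᵣ` as a scalar `c s` by Schur's lemma. Some `c s` is nonzero,
and on `Γ a ⊓ Lᵣ` the operator `transfer s` is `π' (s * a)`, which gives `Γ a ⊓ Lᵣ ≤ Γ' (s * a)`
for all `a`. Since both gradings decompose `Lᵣ`, these inclusions are equalities.
-/

open DirectSum

theorem commute_finsum_mul_of_shift {R A : Type*} [Ring R] [Group A] {P Q : A → R}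
    (hP : Function.HasFiniteSupport P) {φ : R} {c : A}
    (hPφ : ∀ a, P a * φ = φ * P (c⁻¹ * a)) (hQφ : ∀ a, Q a * φ = φ * Q (c⁻¹ * a)) :
    Commute (∑ᶠ a, Q a * P a) φ := by
  have hQP : Function.HasFiniteSupport fun a ↦ Q a * P a :=
    hP.subset fun a ha hPa ↦ ha (by simp [hPa])
  calc (∑ᶠ a, Q a * P a) * φ = ∑ᶠ a, φ * (Q (c⁻¹ * a) * P (c⁻¹ * a)) := by
        rw [finsum_mul' _ _ hQP]
        refine finsum_congr fun a ↦ ?_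
        rw [mul_assoc, hPφ, ← mul_assoc, hQφ, mul_assoc]
    _ = ∑ᶠ a, φ * (Q a * P a) :=
        finsum_comp_equiv (Equiv.mulLeft c⁻¹) (f := fun a ↦ φ * (Q a * P a))
    _ = φ * ∑ᶠ a, Q a * P a := (mul_finsum' _ _ hQP).symm

theorem Module.End.exists_eq_smul_of_commute {F M ι : Type*} [Field F] [IsAlgClosed F]
    [AddCommGroup M] [Module F M] [FiniteDimensional F M] {V : Submodule F M} (hV : V ≠ ⊥)
    {T : ι → Module.End F M} (hTV : ∀ i, ∀ x ∈ V, T i x ∈ V)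
    (hirr : ∀ W ≤ V, (∀ i, ∀ w ∈ W, T i w ∈ W) → W = ⊥ ∨ W = V)
    {φ : Module.End F M} (hφV : ∀ x ∈ V, φ x ∈ V) (hφ : ∀ i, Commute φ (T i)) :
    ∃ c : F, ∀ x ∈ V, φ x = c • x := by
  have : Nontrivial V := Submodule.nontrivial_iff_ne_bot.mpr hV
  obtain ⟨c, hc⟩ := Module.End.exists_eigenvalue (φ.restrict hφV)
  have hW : V ⊓ φ.eigenspace c ≠ ⊥ := fun hbot ↦
    hc (Module.End.eigenspace_restrict_eq_bot hφV (disjoint_iff.mpr (inf_comm V _ ▸ hbot)))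
  have hWinv : ∀ i, ∀ w ∈ V ⊓ φ.eigenspace c, T i w ∈ V ⊓ φ.eigenspace c :=
    fun i w hw ↦ ⟨hTV i w hw.1, Module.End.mapsTo_genEigenspace_of_comm (hφ i) c 1 hw.2⟩
  refine ⟨c, fun x hx ↦ Module.End.mem_eigenspace_iff.mp ?_⟩
  obtain hbot | htop := hirr _ inf_le_left hWinv
  · exact absurd hbot hW
  · rw [← htop] at hx
    exact hx.2

namespace DirectSum.IsInternal

section Projection

variable {R M ι : Type*} [Ring R] [AddCommGroup M] [Module R M] [DecidableEq ι]
  {Γ : ι → Submodule R M}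

theorem linearMap_ext (h : IsInternal Γ) {N : Type*} [AddCommMonoid N] [Module R N]
    {f f' : M →ₗ[R] N} (hff' : ∀ i, ∀ x ∈ Γ i, f x = f' x) : f = f' := by
  ext x
  have hx : x ∈ ⨆ i, Γ i := h.submodule_iSup_eq_top ▸ Submodule.mem_top
  induction hx using Submodule.iSup_induction' with
  | mem i x hx => exact hff' i x hx
  | zero => simp
  | add x y _ _ hx hy => simp [hx, hy]

variable (h : IsInternal Γ)

noncomputable def proj (i : ι) : Module.End R M :=
  letI := h.chooseDecomposition
  (Γ i).subtype ∘ₗ component R ι (fun i ↦ Γ i) i ∘ₗ (decomposeLinearEquiv Γ).toLinearMap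

theorem proj_apply_mem (i : ι) (x : M) : h.proj i x ∈ Γ i :=
  letI := h.chooseDecomposition
  (decompose Γ x i).2

theorem proj_apply_of_mem {i : ι} {x : M} (hx : x ∈ Γ i) : h.proj i x = x :=
  letI := h.chooseDecomposition
  decompose_of_mem_same Γ hx

theorem proj_apply_of_mem_ne {i j : ι} {x : M} (hx : x ∈ Γ j) (hij : i ≠ j) :
    h.proj i x = 0 :=
  letI := h.chooseDecomposition
  decompose_of_mem_ne Γ hx hij.symm

theorem finsum_proj_apply (x : M) : ∑ᶠ i, h.proj i x = x := by
  classical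
  let := h.chooseDecomposition
  have hsupp : Function.support (fun i ↦ h.proj i x) ⊆ (decompose Γ x).support :=
    fun _ hi ↦ DFinsupp.mem_support_iff.mpr fun h0 ↦ hi (congrArg Subtype.val h0)
  rw [finsum_eq_sum_of_support_subset _ hsupp]
  exact sum_support_decompose Γ x

theorem exists_proj_apply_ne_zero {x : M} (hx : x ≠ 0) : ∃ i, h.proj i x ≠ 0 := by
  by_contra! hzero
  exact hx (by rw [← h.finsum_proj_apply x, finsum_eq_zero_of_forall_eq_zero hzero])

theorem proj_eq_zero_of_eq_bot {i : ι} (hi : Γ i = ⊥) : h.proj i = 0 := by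
  ext x
  simpa [hi] using h.proj_apply_mem i x

theorem hasFiniteSupport_proj [IsNoetherian R M] : Function.HasFiniteSupport h.proj :=
  (WellFoundedGT.finite_ne_bot_of_iSupIndep h.submodule_iSupIndep).subset
    fun _ hi hbot ↦ hi (h.proj_eq_zero_of_eq_bot hbot)

theorem hasFiniteSupport_proj_apply [IsNoetherian R M] (x : M) :
    Function.HasFiniteSupport fun i ↦ h.proj i x :=
  h.hasFiniteSupport_proj.subset fun _ hi h0 ↦ hi (by simp [h0])

theorem proj_apply_mem_of_le {κ : Type*} [DecidableEq κ] {g : κ → Submodule R M}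
    (hg : IsInternal g) {ρ : ι → κ} (hρ : ∀ i, Γ i ≤ g (ρ i)) {k : κ} {x : M} (hx : x ∈ g k)
    (i : ι) : h.proj i x ∈ g k := by
  by_cases hik : ρ i = k
  · exact hik ▸ hρ i (h.proj_apply_mem i x)
  have hfactor : h.proj i * hg.proj (ρ i) = h.proj i := by
    refine h.linearMap_ext fun j y hy ↦ ?_
    by_cases hj : ρ j = ρ i
    · simp [hg.proj_apply_of_mem (hj ▸ hρ j hy)]
    · have hij : i ≠ j := fun hij ↦ hj (hij ▸ rfl)
      simp [hg.proj_apply_of_mem_ne (hρ j hy) (Ne.symm hj), h.proj_apply_of_mem_ne hy hij]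
  rw [← hfactor, Module.End.mul_apply, hg.proj_apply_of_mem_ne hx hik, map_zero]
  exact zero_mem _

end Projection

section Transfer

variable {R M A : Type*} [Ring R] [AddCommGroup M] [Module R M] [Mul A] [DecidableEq A]
  {Γ Γ' : A → Submodule R M}

noncomputable def transfer (h : IsInternal Γ) (h' : IsInternal Γ') (s : A) : Module.End R M :=
  ∑ᶠ a, h'.proj (s * a) * h.proj a

variable (h : IsInternal Γ) (h' : IsInternal Γ')

theorem transfer_apply_of_mem [IsNoetherian R M] (s : A) {a : A} {x : M} (hx : x ∈ Γ a) :
    h.transfer h' s x = h'.proj (s * a) x := by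
  have hsupp : Function.HasFiniteSupport fun b ↦ h'.proj (s * b) * h.proj b :=
    h.hasFiniteSupport_proj.subset fun b hb hPb ↦ hb (by simp [hPb])
  rw [transfer, ← LinearMap.evalAddMonoidHom_apply, map_finsum _ hsupp,
    finsum_eq_single _ a fun b hb ↦ ?_]
  · simp [h.proj_apply_of_mem hx]
  · simp [h.proj_apply_of_mem_ne hx hb]

theorem transfer_apply_mem {V : Submodule R M} (hV : ∀ a, ∀ x ∈ V, h.proj a x ∈ V)
    (hV' : ∀ a, ∀ x ∈ V, h'.proj a x ∈ V) (s : A) {x : M} (hx : x ∈ V) :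
    h.transfer h' s x ∈ V :=
  finsum_induction (fun T : Module.End R M ↦ T x ∈ V) (zero_mem _)
    (fun _ _ h₁ h₂ ↦ add_mem h₁ h₂) fun a ↦ hV' (s * a) _ (hV a x hx)

end Transfer

theorem inf_le_of_inf_le_mul {R M A : Type*} [Ring R] [AddCommGroup M] [Module R M]
    [IsNoetherian R M] [Mul A] [IsLeftCancelMul A] [DecidableEq A] {Γ Γ' : A → Submodule R M}
    (h : IsInternal Γ) (h' : IsInternal Γ') {V : Submodule R M}
    (hV : ∀ a, ∀ x ∈ V, h.proj a x ∈ V) {s : A} (hle : ∀ a, Γ a ⊓ V ≤ Γ' (s * a)) (a : A) :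
    Γ' (s * a) ⊓ V ≤ Γ a := by
  rintro x ⟨hx', hxV⟩
  have hproj_mem : ∀ b, h.proj b x ∈ Γ' (s * b) :=
    fun b ↦ hle b ⟨h.proj_apply_mem b x, hV b x hxV⟩
  have hx : x = h.proj a x :=
    calc x = h'.proj (s * a) (∑ᶠ b, h.proj b x) := by
          rw [h.finsum_proj_apply, h'.proj_apply_of_mem hx']
      _ = ∑ᶠ b, h'.proj (s * a) (h.proj b x) := map_finsum _ (h.hasFiniteSupport_proj_apply x)
      _ = h'.proj (s * a) (h.proj a x) := finsum_eq_single _ a fun b hb ↦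
          h'.proj_apply_of_mem_ne (hproj_mem b) fun hab ↦ hb (mul_left_cancel hab).symm
      _ = h.proj a x := h'.proj_apply_of_mem (hproj_mem a)
  exact hx ▸ h.proj_apply_mem a x

section LieGrading

variable {R L A : Type*} [CommRing R] [LieRing L] [LieAlgebra R L] [DecidableEq A]

theorem proj_mul_ad [Group A] {Γ : A → Submodule R L} (h : IsInternal Γ)
    (hΓ : ∀ a b, ∀ x ∈ Γ a, ∀ y ∈ Γ b, ⁅x, y⁆ ∈ Γ (a * b)) {c : A} {v : L} (hv : v ∈ Γ c)
    (a : A) : h.proj a * LieAlgebra.ad R L v = LieAlgebra.ad R L v * h.proj (c⁻¹ * a) := by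
  refine h.linearMap_ext fun b y hy ↦ ?_
  have hvy := hΓ c b v hv y hy
  by_cases hab : a = c * b
  · simp [hab, h.proj_apply_of_mem hvy, h.proj_apply_of_mem hy]
  · have hab' : c⁻¹ * a ≠ b := fun h' ↦ hab (by rw [← h', mul_inv_cancel_left])
    simp [h.proj_apply_of_mem_ne hvy hab, h.proj_apply_of_mem_ne hy hab']

variable [IsNoetherian R L] [CommGroup A] {Γ Γ' : A → Submodule R L}
  (h : IsInternal Γ) (h' : IsInternal Γ')

theorem commute_transfer_ad (hΓ : ∀ a b, ∀ x ∈ Γ a, ∀ y ∈ Γ b, ⁅x, y⁆ ∈ Γ (a * b))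
    (hΓ' : ∀ a b, ∀ x ∈ Γ' a, ∀ y ∈ Γ' b, ⁅x, y⁆ ∈ Γ' (a * b)) (s : A) {c : A} {v : L}
    (hv : v ∈ Γ c) (hv' : v ∈ Γ' c) : Commute (h.transfer h' s) (LieAlgebra.ad R L v) :=
  commute_finsum_mul_of_shift h.hasFiniteSupport_proj (h.proj_mul_ad hΓ hv)
    fun a ↦ by rw [h'.proj_mul_ad hΓ' hv', mul_left_comm]

theorem commute_transfer_ad_of_proj_mem (hΓ : ∀ a b, ∀ x ∈ Γ a, ∀ y ∈ Γ b, ⁅x, y⁆ ∈ Γ (a * b))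
    (hΓ' : ∀ a b, ∀ x ∈ Γ' a, ∀ y ∈ Γ' b, ⁅x, y⁆ ∈ Γ' (a * b)) (s : A) {u : L}
    (hu : ∀ c, h.proj c u ∈ Γ' c) : Commute (h.transfer h' s) (LieAlgebra.ad R L u) := by
  rw [← h.finsum_proj_apply u]
  exact finsum_induction (fun v ↦ Commute (h.transfer h' s) (LieAlgebra.ad R L v))
    (by simp) (fun v w hv hw ↦ by simpa only [map_add] using hv.add_right hw)
    fun c ↦ h.commute_transfer_ad h' hΓ hΓ' s (h.proj_apply_mem c u) (hu c)

end LieGrading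

theorem exists_inf_le_mul_of_isIrreducible {F L A : Type*} [Field F] [IsAlgClosed F]
    [LieRing L] [LieAlgebra F L] [FiniteDimensional F L] [CommGroup A] [DecidableEq A]
    {Γ Γ' : A → Submodule F L} (h : IsInternal Γ) (h' : IsInternal Γ')
    (hΓ : ∀ a b, ∀ x ∈ Γ a, ∀ y ∈ Γ b, ⁅x, y⁆ ∈ Γ (a * b))
    (hΓ' : ∀ a b, ∀ x ∈ Γ' a, ∀ y ∈ Γ' b, ⁅x, y⁆ ∈ Γ' (a * b)) {U V : Submodule F L}
    (hU : ∀ a, ∀ u ∈ U, h.proj a u ∈ U) (hUΓ' : ∀ a, Γ a ⊓ U ≤ Γ' a)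
    (hV : ∀ a, ∀ x ∈ V, h.proj a x ∈ V) (hV' : ∀ a, ∀ x ∈ V, h'.proj a x ∈ V)
    (hUV : ∀ u ∈ U, ∀ x ∈ V, ⁅u, x⁆ ∈ V) (hVbot : V ≠ ⊥)
    (hirr : ∀ W ≤ V, (∀ u ∈ U, ∀ w ∈ W, ⁅u, w⁆ ∈ W) → W = ⊥ ∨ W = V) :
    ∃ s, ∀ a, Γ a ⊓ V ≤ Γ' (s * a) := by
  have hscalar : ∀ s, ∃ c : F, ∀ x ∈ V, h.transfer h' s x = c • x := fun s ↦
    Module.End.exists_eq_smul_of_commute hVbot (T := fun u : U ↦ LieAlgebra.ad F L u)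
      (fun u ↦ hUV u u.2) (fun W hW hinv ↦ hirr W hW fun u hu ↦ hinv ⟨u, hu⟩)
      (fun _ ↦ h.transfer_apply_mem h' hV hV' s)
      fun u ↦ h.commute_transfer_ad_of_proj_mem h' hΓ hΓ' s
        fun c ↦ hUΓ' c ⟨h.proj_apply_mem c u, hU c u u.2⟩
  choose c hc using hscalar
  obtain ⟨x, hxV, hx0⟩ := Submodule.exists_mem_ne_zero_of_ne_bot hVbot
  obtain ⟨a, ha⟩ := h.exists_proj_apply_ne_zero hx0
  obtain ⟨b, hb⟩ := h'.exists_proj_apply_ne_zero ha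
  -- `transfer (b * a⁻¹)` sends `π a x` to `π' b (π a x) ≠ 0`
  have hc_ne_zero : c (b * a⁻¹) ≠ 0 := by
    intro hzero
    have := hc (b * a⁻¹) _ (hV a x hxV)
    rw [hzero, zero_smul, h.transfer_apply_of_mem h', inv_mul_cancel_right] at this
    exacts [hb this, h.proj_apply_mem a x]
  refine ⟨b * a⁻¹, fun a' y ⟨hy, hyV⟩ ↦ ?_⟩
  have hy_eq : y = (c (b * a⁻¹))⁻¹ • h'.proj (b * a⁻¹ * a') y := by
    rw [← h.transfer_apply_of_mem h' _ hy, hc _ y hyV, inv_smul_smul₀ hc_ne_zero]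
  exact hy_eq ▸ Submodule.smul_mem _ _ (h'.proj_apply_mem _ y)

end DirectSum.IsInternal

theorem stmt14_general (F : Type) [Field F] [IsAlgClosed F]
    (n : ℕ)
    (L : Type) [LieRing L] [LieAlgebra F L] [FiniteDimensional F L]
    -- the ℤₙ-grading on L
    (g : ZMod n → Submodule F L) (hg : DirectSum.IsInternal g)
    (hgrad : ∀ r s : ZMod n, ∀ x ∈ g r, ∀ y ∈ g s, ⁅x, y⁆ ∈ g (r + s))
    -- L₀ is a (semisimple) subalgebra
    (g0 : LieSubalgebra F L) (hg0 : g0.toSubmodule = g 0)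
    -- each Lᵣ, r ≠ 0, is a nonzero irreducible L₀-module
    (hirr : ∀ r : ZMod n, r ≠ 0 → g r ≠ ⊥ ∧
      ∀ W : Submodule F L, W ≤ g r → (∀ x ∈ g0, ∀ w ∈ W, ⁅x, w⁆ ∈ W) →
        W = ⊥ ∨ W = g r)
    -- two A-gradings refining the ℤₙ-grading and agreeing on L₀
    (A : Type) [CommGroup A] [DecidableEq A]
    (Γ Γ' : A → Submodule F L)
    (hΓ : DirectSum.IsInternal Γ) (hΓ' : DirectSum.IsInternal Γ')
    (hΓgrad : ∀ a b : A, ∀ x ∈ Γ a, ∀ y ∈ Γ b, ⁅x, y⁆ ∈ Γ (a * b))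
    (hΓ'grad : ∀ a b : A, ∀ x ∈ Γ' a, ∀ y ∈ Γ' b, ⁅x, y⁆ ∈ Γ' (a * b))
    (href : ∀ a : A, ∃ r : ZMod n, Γ a ≤ g r)
    (href' : ∀ a : A, ∃ r : ZMod n, Γ' a ≤ g r)
    (hagree : ∀ a : A, Γ a ⊓ g 0 = Γ' a ⊓ g 0) :
    -- the gradings differ only by shifts on the components of the ℤₙ-grading
    ∀ r : ZMod n, ∃ s : A, ∀ a : A, Γ' a ⊓ g r = Γ (s * a) ⊓ g r := by
  intro r
  rcases eq_or_ne r 0 with rfl | hr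
  · exact ⟨1, fun a ↦ by rw [one_mul, hagree]⟩
  obtain ⟨hrbot, hrirr⟩ := hirr r hr
  choose ρ hρ using href
  choose ρ' hρ' using href'
  have hproj {k : ZMod n} : ∀ a, ∀ x ∈ g k, hΓ.proj a x ∈ g k :=
    fun a _ hx ↦ hΓ.proj_apply_mem_of_le hg hρ hx a
  have hproj' {k : ZMod n} : ∀ a, ∀ x ∈ g k, hΓ'.proj a x ∈ g k :=
    fun a _ hx ↦ hΓ'.proj_apply_mem_of_le hg hρ' hx a
  obtain ⟨s, hs⟩ := hΓ.exists_inf_le_mul_of_isIrreducible hΓ' hΓgrad hΓ'grad hproj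
    (fun a ↦ hagree a ▸ inf_le_left) hproj hproj'
    (fun u hu x hx ↦ zero_add r ▸ hgrad 0 r u hu x hx) hrbot
    fun W hW hinv ↦ hrirr W hW fun u hu ↦ hinv u (hg0 ▸ hu)
  refine ⟨s⁻¹, fun a ↦ le_inf ?_ inf_le_right |>.antisymm (le_inf ?_ inf_le_right)⟩
  · simpa using hΓ.inf_le_of_inf_le_mul hΓ' hproj hs (s⁻¹ * a)
  · simpa using hs (s⁻¹ * a)

theorem stmt14 (F : Type) [Field F] [IsAlgClosed F] [CharZero F]
    (n : ℕ) (hn : 2 ≤ n)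
    (L : Type) [LieRing L] [LieAlgebra F L] [FiniteDimensional F L]
    [LieAlgebra.IsSemisimple F L]
    -- the ℤₙ-grading on L
    (g : ZMod n → Submodule F L) (hg : DirectSum.IsInternal g)
    (hgrad : ∀ r s : ZMod n, ∀ x ∈ g r, ∀ y ∈ g s, ⁅x, y⁆ ∈ g (r + s))
    -- L₀ is a (semisimple) subalgebra
    (g0 : LieSubalgebra F L) (hg0 : g0.toSubmodule = g 0)
    (hg0ss : LieAlgebra.IsSemisimple F ↥g0)
    -- each Lᵣ, r ≠ 0, is a nonzero irreducible L₀-module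
    (hirr : ∀ r : ZMod n, r ≠ 0 → g r ≠ ⊥ ∧
      ∀ W : Submodule F L, W ≤ g r → (∀ x ∈ g0, ∀ w ∈ W, ⁅x, w⁆ ∈ W) →
        W = ⊥ ∨ W = g r)
    -- two A-gradings refining the ℤₙ-grading and agreeing on L₀
    (A : Type) [CommGroup A] [DecidableEq A]
    (Γ Γ' : A → Submodule F L)
    (hΓ : DirectSum.IsInternal Γ) (hΓ' : DirectSum.IsInternal Γ')
    (hΓgrad : ∀ a b : A, ∀ x ∈ Γ a, ∀ y ∈ Γ b, ⁅x, y⁆ ∈ Γ (a * b))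
    (hΓ'grad : ∀ a b : A, ∀ x ∈ Γ' a, ∀ y ∈ Γ' b, ⁅x, y⁆ ∈ Γ' (a * b))
    (href : ∀ a : A, ∃ r : ZMod n, Γ a ≤ g r)
    (href' : ∀ a : A, ∃ r : ZMod n, Γ' a ≤ g r)
    (hagree : ∀ a : A, Γ a ⊓ g 0 = Γ' a ⊓ g 0) :
    -- the gradings differ only by shifts on the components of the ℤₙ-grading
    ∀ r : ZMod n, ∃ s : A, ∀ a : A, Γ' a ⊓ g r = Γ (s * a) ⊓ g r :=
  stmt14_general F n L g hg hgrad g0 hg0 hirr A Γ Γ' hΓ hΓ' hΓgrad hΓ'grad href href' hagree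
end

section
/- Let F be an algebraically closed field of characteristic 0 and let ω ∈ F be a primitive 8th root of unity. Let U be a 2-dimensional and V an 8-dimensional F-vector space. For a ∈ SL(U) and b ∈ SL(V), the induced linear map a ⊗ Λ²(b) on U ⊗ Λ²V equals the identity if and only if (a, b) lies in the subgroup generated by (−1_U, ω² 1_V). In particular, the kernel of the group homomorphism SL(U) × SL(V) → GL(U ⊗ Λ²V), (a, b) ↦ a ⊗ Λ²(b), is cyclic of order 4, generated by (−1_U, ω² 1_V). -/
open ExteriorAlgebra

/-- The linear map induced on the `n`-th exterior power by an endomorphism of a module. -/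
noncomputable def exteriorPowerMap (n : ℕ) {R M : Type*} [CommRing R] [AddCommGroup M]
    [Module R M] (f : M →ₗ[R] M) : ⋀[R]^n M →ₗ[R] ⋀[R]^n M :=
  (ExteriorAlgebra.map f).toLinearMap.restrict (p := (⋀[R]^n M : Submodule R _))
    (q := (⋀[R]^n M : Submodule R _)) (by
      intro x hx
      have pow_mono : ∀ {S T : Submodule R (ExteriorAlgebra R M)}, S ≤ T →
          ∀ k : ℕ, S ^ k ≤ T ^ k := by
        intro S T h k
        induction k with
        | zero => simp
        | succ k ih => rw [pow_succ, pow_succ]; exact Submodule.mul_le.mpr fun a ha b hb => Submodule.mul_mem_mul (ih ha) (h hb)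
      have key : Submodule.map (ExteriorAlgebra.map f).toLinearMap (⋀[R]^n M) ≤ ⋀[R]^n M := by
        rw [exteriorPower, Submodule.map_pow]
        refine pow_mono ?_ n
        rw [ExteriorAlgebra.ι_range_map_map]
        exact LinearMap.map_le_range
      exact key ⟨x, hx, rfl⟩)

/-!
If `a ⊗ ⋀²b = 1`, then `a u ⊗ ⋀²b x = u ⊗ x` for all pure tensors, which forces `a = μ` and
`⋀²b = μ⁻¹` to be scalars. A map whose second exterior power is a nonzero scalar `ν` is itself a
scalar once the dimension is at least `3`: were `v, b v, w` independent, the nonzero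
`w ∧ v ∧ b v` would satisfy `ν (w ∧ v ∧ b v) = b w ∧ b v ∧ b v = 0`. So `b = c` with
`c² = μ⁻¹ = μ` (as `det a = μ² = 1`); hence `c⁴ = 1`, i.e. `c` is an even power of `ω`.
-/

section

variable {K E : Type*} [Field K] [AddCommGroup E] [Module K E]

theorem ExteriorAlgebra.ιMulti_ne_zero_of_linearIndependent {n : ℕ} {v : Fin n → E}
    (hv : LinearIndependent K v) : ιMulti K n v ≠ 0 := by
  let univ : Set.powersetCard (Fin n) n := ⟨Finset.univ, by simp⟩
  have hid : Set.powersetCard.ofFinEmbEquiv.symm univ = (OrderIso.refl (Fin n)).toOrderEmbedding :=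
    (Finset.orderEmbOfFin_unique' _ fun _ => Finset.mem_univ _).symm
  have h := (exteriorPower.ιMulti_family_linearIndependent_field (n := n) hv).ne_zero univ
  rw [exteriorPower.ιMulti_family, hid] at h
  exact fun h0 => h (Subtype.ext h0)

theorem LinearMap.smul_id_injective [Nontrivial E] :
    Function.Injective fun s : K => s • (LinearMap.id : Module.End K E) := by
  intro s t hst
  apply FaithfulSMul.algebraMap_injective K (Module.End K E)
  simpa only [Module.algebraMap_end_eq_smul_id] using hst

theorem LinearMap.smul_id_eq_id_iff [Nontrivial E] {s : K} :
    s • (LinearMap.id : Module.End K E) = LinearMap.id ↔ s = 1 := by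
  simpa using (LinearMap.smul_id_injective (K := K) (E := E)).eq_iff (a := s) (b := 1)

theorem exteriorPowerMap_eq_map (n : ℕ) (f : Module.End K E) :
    exteriorPowerMap n f = exteriorPower.map n f := by
  ext v
  simp [exteriorPowerMap, LinearMap.coe_restrict_apply, Function.comp_def]

theorem exteriorPower.map_smul_id (n : ℕ) (s : K) :
    exteriorPower.map n (s • LinearMap.id : Module.End K E) = s ^ n • LinearMap.id := by
  ext v
  simp [AlternatingMap.map_smul_univ]

end

section

open TensorProduct

variable {K U W : Type*} [Field K] [AddCommGroup U] [Module K U] [AddCommGroup W] [Module K W]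
  [Nontrivial U] [Nontrivial W] {a : Module.End K U} {c : Module.End K W}

theorem TensorProduct.exists_eq_smul_id_right_of_map_eq_id (h : map a c = LinearMap.id) :
    ∃ μ : K, c = μ • LinearMap.id := by
  have key (φ : Module.Dual K U) (u : U) (w : W) : φ (a u) • c w = φ u • w := by
    have h₁ : a u ⊗ₜ c w = u ⊗ₜ[K] w := by simpa using LinearMap.congr_fun h (u ⊗ₜ w)
    simpa using congr(lift ((LinearMap.lsmul K W).comp φ) $h₁)
  obtain ⟨u₀, hu₀⟩ := exists_ne (0 : U)
  obtain ⟨φ, hφ⟩ := Module.Projective.exists_dual_eq_one K hu₀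
  obtain ⟨w₀, hw₀⟩ := exists_ne (0 : W)
  have hφa : φ (a u₀) ≠ 0 := fun h₀ => hw₀ (by simpa [h₀, hφ] using (key φ u₀ w₀).symm)
  refine ⟨(φ (a u₀))⁻¹, LinearMap.ext fun w => ?_⟩
  calc c w = (φ (a u₀))⁻¹ • (φ (a u₀) • c w) := by rw [smul_smul, inv_mul_cancel₀ hφa, one_smul]
    _ = (φ (a u₀))⁻¹ • w := by rw [key, hφ, one_smul]

theorem TensorProduct.exists_eq_smul_id_of_map_eq_id (h : map a c = LinearMap.id) :
    ∃ μ : K, a = μ • LinearMap.id ∧ c = μ⁻¹ • LinearMap.id := by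
  have h' : map c a = LinearMap.id := by
    ext w u
    simpa using congr(TensorProduct.comm K U W ($h (u ⊗ₜ w)))
  obtain ⟨μ, rfl⟩ := exists_eq_smul_id_right_of_map_eq_id h'
  obtain ⟨ν, rfl⟩ := exists_eq_smul_id_right_of_map_eq_id h
  have hνμ : ν * μ = 1 := by
    apply LinearMap.smul_id_injective (E := U ⊗[K] W)
    simpa [map_smul_left, map_smul_right, smul_smul] using h
  exact ⟨μ, rfl, by rw [eq_inv_of_mul_eq_one_left hνμ]⟩

end

open ExteriorAlgebra in
theorem exteriorPower.exists_eq_smul_id_of_map_two_eq_smul_id {K E : Type*} [Field K]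
    [AddCommGroup E] [Module K E] [FiniteDimensional K E] (hE : 2 < Module.finrank K E)
    {b : Module.End K E} {μ : K} (hμ : μ ≠ 0) (h : exteriorPower.map 2 b = μ • LinearMap.id) :
    ∃ c : K, b = c • LinearMap.id := by
  have hwedge (x y : E) : ι K (b x) * ι K (b y) = μ • (ι K x * ι K y) := by
    simpa [ExteriorAlgebra.ιMulti_apply, List.ofFn_succ, Matrix.vecTail] using
      congr(((($h (exteriorPower.ιMulti K 2 ![x, y])) : ⋀[K]^2 E) : ExteriorAlgebra K E))
  refine LinearMap.exists_eq_smul_id_of_forall_notLinearIndependent fun v hv => ?_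
  obtain ⟨w, hw⟩ := exists_linearIndependent_cons_of_lt_finrank hv (by simpa using hE)
  apply ιMulti_ne_zero_of_linearIndependent hw
  have : μ • ExteriorAlgebra.ιMulti K 3 (Fin.cons w ![v, b v]) = 0 :=
    calc μ • ExteriorAlgebra.ιMulti K 3 (Fin.cons w ![v, b v])
        = μ • (ι K w * ι K v) * ι K (b v) := by
          simp [ExteriorAlgebra.ιMulti_apply, mul_assoc]
      _ = ι K (b w) * ι K (b v) * ι K (b v) := by rw [hwedge]
      _ = 0 := by rw [mul_assoc, ι_sq_zero, mul_zero]
  exact (smul_eq_zero.mp this).resolve_left hμ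

theorem stmt16_general (F U V : Type) [Field F]
    [AddCommGroup U] [Module F U] [FiniteDimensional F U]
    [AddCommGroup V] [Module F V] [FiniteDimensional F V]
    (hU : Module.finrank F U = 2) (hV : Module.finrank F V = 8)
    (ω : F) (hω : IsPrimitiveRoot ω 8) :
    (∀ (a : Module.End F U) (b : Module.End F V), LinearMap.det a = 1 → LinearMap.det b = 1 →
      (TensorProduct.map a (exteriorPowerMap 2 b) = LinearMap.id ↔
        ∃ k : ℕ, a = ((-1 : F) ^ k) • (LinearMap.id : Module.End F U) ∧
          b = (ω ^ (2 * k)) • (LinearMap.id : Module.End F V))) ∧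
    (∀ k : ℕ,
      (((-1 : F) ^ k) • (LinearMap.id : Module.End F U) = LinearMap.id ∧
        (ω ^ (2 * k)) • (LinearMap.id : Module.End F V) = LinearMap.id) ↔ (4 : ℕ) ∣ k) := by
  have : Nontrivial U := Module.nontrivial_of_finrank_pos (R := F) (by omega)
  have : Nontrivial V := Module.nontrivial_of_finrank_pos (R := F) (by omega)
  have : Nontrivial (⋀[F]^2 V) := Module.nontrivial_of_finrank_pos (R := F)
    (by rw [exteriorPower.finrank_eq, hV]; decide)
  have hω4 : ω ^ 4 = -1 := (hω.pow (by norm_num) (by norm_num : 8 = 4 * 2)).eq_neg_one_of_two_right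
  have hsq (k : ℕ) : (ω ^ (2 * k)) ^ 2 = (-1) ^ k := by
    rw [← hω4, ← pow_mul, ← pow_mul]; ring_nf
  refine ⟨fun a b ha _ => ⟨fun h => ?_, ?_⟩, fun k => ?_⟩
  · rw [exteriorPowerMap_eq_map] at h
    obtain ⟨μ, rfl, hb⟩ := TensorProduct.exists_eq_smul_id_of_map_eq_id h
    have hμ2 : μ ^ 2 = 1 := by simpa [LinearMap.det_smul, hU] using ha
    have hμ : μ⁻¹ = μ := inv_eq_of_mul_eq_one_right (by rw [← sq, hμ2])
    obtain ⟨c, rfl⟩ := exteriorPower.exists_eq_smul_id_of_map_two_eq_smul_id (by omega)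
      (by rintro h0; simp [inv_eq_zero.mp h0] at hμ2) hb
    rw [exteriorPower.map_smul_id, hμ] at hb
    have hc2 : c ^ 2 = μ := LinearMap.smul_id_injective hb
    obtain ⟨k, -, rfl⟩ := (hω.pow (by norm_num) (by norm_num : 8 = 2 * 4)).eq_pow_of_pow_eq_one
      (show c ^ 4 = 1 by rw [← hμ2, ← hc2, ← pow_mul])
    refine ⟨k, ?_, by rw [pow_mul]⟩
    rw [← hc2, ← pow_mul ω, hsq]
  · rintro ⟨k, rfl, rfl⟩
    rw [exteriorPowerMap_eq_map, exteriorPower.map_smul_id, TensorProduct.map_smul_left,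
      TensorProduct.map_smul_right, TensorProduct.map_id, smul_smul, hsq, ← mul_pow,
      neg_one_mul, neg_neg, one_pow, one_smul]
  · rw [LinearMap.smul_id_eq_id_iff, LinearMap.smul_id_eq_id_iff, hω.pow_eq_one_iff_dvd]
    refine ⟨fun ⟨_, h⟩ => by omega, fun h => ⟨(Nat.even_iff.mpr (by omega)).neg_one_pow, by omega⟩⟩

theorem stmt16 (F U V : Type) [Field F] [IsAlgClosed F] [CharZero F]
    [AddCommGroup U] [Module F U] [FiniteDimensional F U]
    [AddCommGroup V] [Module F V] [FiniteDimensional F V]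
    (hU : Module.finrank F U = 2) (hV : Module.finrank F V = 8)
    (ω : F) (hω : IsPrimitiveRoot ω 8) :
    (∀ (a : Module.End F U) (b : Module.End F V), LinearMap.det a = 1 → LinearMap.det b = 1 →
      (TensorProduct.map a (exteriorPowerMap 2 b) = LinearMap.id ↔
        ∃ k : ℕ, a = ((-1 : F) ^ k) • (LinearMap.id : Module.End F U) ∧
          b = (ω ^ (2 * k)) • (LinearMap.id : Module.End F V))) ∧
    (∀ k : ℕ,
      (((-1 : F) ^ k) • (LinearMap.id : Module.End F U) = LinearMap.id ∧
        (ω ^ (2 * k)) • (LinearMap.id : Module.End F V) = LinearMap.id) ↔ (4 : ℕ) ∣ k) :=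
  stmt16_general F U V hU hV ω hω
end

section
/- Let W = 𝔽₂¹⁰ with the standard bilinear form x • y = Σ_{i=1}^{10} x_i y_i, let 𝟙 = (1, 1, …, 1) ∈ W, and let K = 𝔽₂·𝟙, so K ⊆ K^⊥ and • induces a nondegenerate alternating bilinear form on the 8-dimensional space K^⊥/K. For x ∈ W let wt(x) denote its Hamming weight, and for x ∈ K^⊥ let x̄ denote its class in K^⊥/K. Let ε₁, …, ε₁₀ be the standard basis of W. Then: (a) the 2-dimensional subspace U = span{ (ε₁+ε₂+ε₃+ε₄)^̄, (ε₃+ε₄+ε₅+ε₆)^̄ } of K^⊥/K is totally isotropic and no nonzero element of U is the class x̄ of a vector x of weight 2; and (b) if U' is any 2-dimensional totally isotropic subspace of K^⊥/K such that no nonzero element of U' is the class of a weight-2 vector, then there is a permutation σ of the coordinates {1, …, 10} carrying U' onto U. That is, up to permutation of the 10 coordinates, U is the unique such subspace. -/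
/-- The Hamming weight of a vector in `𝔽₂¹⁰`. -/
def wt (x : Fin 10 → ZMod 2) : ℕ := (Finset.univ.filter fun i => x i ≠ 0).card

/-- The standard bilinear form `x • y = ∑ xᵢ yᵢ` on `𝔽₂¹⁰`. -/
def dotForm (x y : Fin 10 → ZMod 2) : ZMod 2 := ∑ i, x i * y i

/-- The all-ones vector `𝟙`, spanning `K`. -/
def allOnes : Fin 10 → ZMod 2 := fun _ => 1

/-- We encode a subspace `Ū` of `K^⊥/K` by its full preimage `U` in `𝔽₂¹⁰`, a subspace
containing `𝟙 = allOnes` (so `K ≤ U`). The conditions: `U ≤ K^⊥` (every element is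
orthogonal to `𝟙`); `Ū` is 2-dimensional (`U` is 3-dimensional, since `dim K = 1`);
`Ū` is totally isotropic for the induced form (representatives pairwise orthogonal);
and no nonzero element of `Ū` is the class of a weight-2 vector (no weight-2 vector lies
in `U`; recall the class of a weight-2 vector equals the class of its complement, a
weight-8 vector, and `U` contains with any `x` also `x + 𝟙`). -/
def GoodSubspace (U : Submodule (ZMod 2) (Fin 10 → ZMod 2)) : Prop :=
  allOnes ∈ U ∧
  (∀ x ∈ U, dotForm x allOnes = 0) ∧
  Module.finrank (ZMod 2) U = 3 ∧
  (∀ x ∈ U, ∀ y ∈ U, dotForm x y = 0) ∧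
  (∀ x ∈ U, wt x ≠ 2)

/-- The vector `ε₁ + ε₂ + ε₃ + ε₄`. -/
def v₁₂₃₄ : Fin 10 → ZMod 2 := fun i => if (i : ℕ) < 4 then 1 else 0

/-- The vector `ε₃ + ε₄ + ε₅ + ε₆`. -/
def v₃₄₅₆ : Fin 10 → ZMod 2 := fun i => if 2 ≤ (i : ℕ) ∧ (i : ℕ) < 6 then 1 else 0

/-- The distinguished subspace `U` (the preimage in `𝔽₂¹⁰` of
`span{(ε₁+ε₂+ε₃+ε₄)^̄, (ε₃+ε₄+ε₅+ε₆)^̄} ⊆ K^⊥/K`). -/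
def distinguishedU : Submodule (ZMod 2) (Fin 10 → ZMod 2) :=
  Submodule.span (ZMod 2) {allOnes, v₁₂₃₄, v₃₄₅₆}


/-!
Every non-zero class of a good subspace `U` has weight 4 or 6 (weights in `K^⊥` are even, 2 and 8
are excluded, and `x ↦ x + 𝟙` exchanges 4 and 6), so `U` contains weight-4 vectors `a`, `b`
spanning it together with `𝟙`. Writing `m = |supp a ∩ supp b|`, isotropy makes `m` even while
`wt (a + b) = 8 - 2m` is 4 or 6; hence `m = 2`. The pair of coordinate patterns `(aᵢ, bᵢ)` then
takes the values `(1,1), (1,0), (0,1), (0,0)` exactly 2, 2, 2, 4 times, as it does for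
`(ε₁+ε₂+ε₃+ε₄, ε₃+ε₄+ε₅+ε₆)`, and a permutation matching the fibres carries one pair onto the
other. Equality of the subspaces follows by comparing dimensions.
-/

open Finset Submodule Module

lemma ZMod.eq_zero_or_eq_one_of_two (c : ZMod 2) : c = 0 ∨ c = 1 := by
  revert c; decide

lemma exists_perm_comp_eq_of_card_fiber_eq {α β : Type*} [Fintype α] [DecidableEq β]
    {f g : α → β} (h : ∀ c, Fintype.card {a // f a = c} = Fintype.card {a // g a = c}) :
    ∃ σ : Equiv.Perm α, g ∘ σ = f :=
  ⟨Equiv.ofFiberEquiv fun c => Fintype.equivOfCardEq (h c), funext (Equiv.ofFiberEquiv_map _)⟩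

lemma exists_mem_notMem_span_of_card_lt {K V : Type*} [DivisionRing K] [AddCommGroup V]
    [Module K V] [FiniteDimensional K V] {U : Submodule K V} (s : Finset V)
    (hs : s.card < finrank K U) : ∃ x ∈ U, x ∉ span K (s : Set V) := by
  by_contra! hU
  have := (Submodule.finrank_mono hU).trans (finrank_span_finset_le_card s)
  omega

lemma dotProduct_eq_zero_of_mem_span {R ι : Type*} [CommRing R] [Fintype ι] {S : Set (ι → R)}
    (hS : ∀ u ∈ S, ∀ v ∈ S, u ⬝ᵥ v = 0) {x y : ι → R} (hx : x ∈ span R S) (hy : y ∈ span R S) :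
    x ⬝ᵥ y = 0 := by
  induction hx using Submodule.span_induction with
  | mem u hu =>
    induction hy using Submodule.span_induction with
    | mem v hv => exact hS u hu v hv
    | zero => exact dotProduct_zero u
    | add v w _ _ hv hw => rw [dotProduct_add, hv, hw, add_zero]
    | smul c v _ hv => rw [dotProduct_smul, hv, smul_zero]
  | zero => exact zero_dotProduct y
  | add u w _ _ hu hw => rw [add_dotProduct, hu, hw, add_zero]
  | smul c u _ hu => rw [smul_dotProduct, hu, smul_zero]

section Weight

variable (x y : Fin 10 → ZMod 2)

lemma wt_eq_sum_val : wt x = ∑ i, (x i).val := by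
  rw [wt, card_filter]
  refine sum_congr rfl fun i _ => ?_
  generalize x i = c
  revert c; decide

lemma natCast_wt : (wt x : ZMod 2) = ∑ i, x i := by
  simp only [wt_eq_sum_val, Nat.cast_sum, ZMod.natCast_zmod_val]

lemma dotForm_eq_natCast_wt_mul : dotForm x y = (wt (x * y) : ZMod 2) := by
  rw [natCast_wt]; rfl

lemma dotForm_allOnes : dotForm x allOnes = (wt x : ZMod 2) := by
  rw [dotForm_eq_natCast_wt_mul, show allOnes = 1 from rfl, mul_one]

lemma wt_eq_zero_iff : wt x = 0 ↔ x = 0 := hammingNorm_eq_zero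

lemma wt_add_allOnes : wt (x + allOnes) = 10 - wt x := by
  suffices wt (x + allOnes) + wt x = 10 by omega
  calc wt (x + allOnes) + wt x = ∑ i, (((x + allOnes) i).val + (x i).val) := by
        rw [wt_eq_sum_val, wt_eq_sum_val, sum_add_distrib]
    _ = ∑ _i : Fin 10, 1 := sum_congr rfl fun i _ => by
        simp only [Pi.add_apply, allOnes]
        generalize x i = c
        revert c; decide
    _ = 10 := by simp

lemma wt_add_add_two_mul_wt_mul : wt (x + y) + 2 * wt (x * y) = wt x + wt y := by
  simp only [wt_eq_sum_val, mul_sum, ← sum_add_distrib]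
  refine sum_congr rfl fun i _ => ?_
  simp only [Pi.add_apply, Pi.mul_apply]
  generalize x i = a; generalize y i = b
  revert a b; decide

lemma card_fiber_eq_wt :
    Fintype.card {i // (x i, y i) = (1, 1)} = wt (x * y) ∧
    Fintype.card {i // (x i, y i) = (1, 0)} + wt (x * y) = wt x ∧
    Fintype.card {i // (x i, y i) = (0, 1)} + wt (x * y) = wt y ∧
    Fintype.card {i // (x i, y i) = (0, 0)} + wt x + wt y = 10 + wt (x * y) := by
  have hten : (10 : ℕ) = ∑ _i : Fin 10, 1 := by simp
  simp only [Fintype.card_subtype, card_filter, wt_eq_sum_val, hten, ← sum_add_distrib]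
  refine ⟨?_, ?_, ?_, ?_⟩ <;> refine sum_congr rfl fun i _ => ?_ <;>
    simp only [Pi.mul_apply] <;>
    generalize x i = a <;> generalize y i = b <;> revert a b <;> decide

lemma exists_perm_comp_eq_of_wt_eq {x' y' : Fin 10 → ZMod 2} (hx : wt x = wt x')
    (hy : wt y = wt y') (hxy : wt (x * y) = wt (x' * y')) :
    ∃ σ : Equiv.Perm (Fin 10), x' ∘ σ = x ∧ y' ∘ σ = y := by
  obtain ⟨h₁₁, h₁₀, h₀₁, h₀₀⟩ := card_fiber_eq_wt x y
  obtain ⟨h₁₁', h₁₀', h₀₁', h₀₀'⟩ := card_fiber_eq_wt x' y'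
  obtain ⟨σ, hσ⟩ := exists_perm_comp_eq_of_card_fiber_eq
    (f := fun i => (x i, y i)) (g := fun i => (x' i, y' i)) <| by
      rintro ⟨a, b⟩
      rcases ZMod.eq_zero_or_eq_one_of_two a with rfl | rfl <;>
        rcases ZMod.eq_zero_or_eq_one_of_two b with rfl | rfl <;> omega
  exact ⟨σ, funext fun i => congrArg Prod.fst (congrFun hσ i),
    funext fun i => congrArg Prod.snd (congrFun hσ i)⟩

end Weight

lemma GoodSubspace.wt_eq_four_or_six {U : Submodule (ZMod 2) (Fin 10 → ZMod 2)}
    (hU : GoodSubspace U) {x : Fin 10 → ZMod 2} (hx : x ∈ U)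
    (hx₁ : x ∉ span (ZMod 2) {allOnes}) : wt x = 4 ∨ wt x = 6 := by
  obtain ⟨h₁, hperp, -, -, hwt⟩ := hU
  have hx₀ : wt x ≠ 0 := by
    rw [Ne, wt_eq_zero_iff]
    rintro rfl
    exact hx₁ (zero_mem _)
  have hx₁₀ : wt (x + allOnes) ≠ 0 := by
    rw [Ne, wt_eq_zero_iff]
    intro h
    exact hx₁ (eq_neg_of_add_eq_zero_left h ▸ neg_mem (mem_span_singleton_self _))
  have heven : 2 ∣ wt x := by
    rw [← ZMod.natCast_eq_zero_iff, ← dotForm_allOnes]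
    exact hperp x hx
  have h₂ := hwt x hx
  have h₈ := hwt _ (add_mem hx h₁)
  rw [wt_add_allOnes] at hx₁₀ h₈
  have : wt x ≤ 10 := hammingNorm_le_card_fintype
  omega

lemma GoodSubspace.exists_wt_eq_four {U : Submodule (ZMod 2) (Fin 10 → ZMod 2)}
    (hU : GoodSubspace U) (s : Finset (Fin 10 → ZMod 2)) (hs₁ : allOnes ∈ s) (hs : s.card < 3) :
    ∃ x ∈ U, x ∉ span (ZMod 2) (s : Set (Fin 10 → ZMod 2)) ∧ wt x = 4 := by
  have ⟨hU₁, _, hrank, _, _⟩ := hU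
  obtain ⟨x, hx, hxs⟩ := exists_mem_notMem_span_of_card_lt s (hrank ▸ hs)
  have h₁ : allOnes ∈ span (ZMod 2) (s : Set (Fin 10 → ZMod 2)) := subset_span hs₁
  have hx₁ : x ∉ span (ZMod 2) {allOnes} :=
    fun h => hxs (span_le.2 (Set.singleton_subset_iff.2 h₁) h)
  rcases hU.wt_eq_four_or_six hx hx₁ with h₄ | h₆
  · exact ⟨x, hx, hxs, h₄⟩
  · refine ⟨x + allOnes, add_mem hx hU₁, fun h => hxs ?_, by rw [wt_add_allOnes, h₆]⟩
    simpa using sub_mem h h₁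

lemma finrank_distinguishedU : finrank (ZMod 2) distinguishedU = 3 := by
  have hli : LinearIndependent (ZMod 2) ![allOnes, v₁₂₃₄, v₃₄₅₆] := by
    rw [Fintype.linearIndependent_iff]; decide
  have := finrank_span_eq_card hli
  rwa [Matrix.range_cons, Matrix.range_cons_cons_empty, Set.singleton_union,
    Fintype.card_fin] at this

lemma distinguishedU_goodSubspace : GoodSubspace distinguishedU := by
  have hiso : ∀ x ∈ distinguishedU, ∀ y ∈ distinguishedU, dotForm x y = 0 := by
    refine fun x hx y hy => dotProduct_eq_zero_of_mem_span ?_ hx hy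
    simp only [Set.mem_insert_iff, Set.mem_singleton_iff]
    rintro u (rfl | rfl | rfl) v (rfl | rfl | rfl) <;> decide
  have h₁ : allOnes ∈ distinguishedU := subset_span (by simp)
  refine ⟨h₁, fun x hx => hiso x hx _ h₁, finrank_distinguishedU, hiso, fun x hx => ?_⟩
  obtain ⟨a, z, hz, rfl⟩ := mem_span_insert.1 hx
  obtain ⟨b, c, rfl⟩ := mem_span_pair.1 hz
  exact (by decide : ∀ a b c : ZMod 2, wt (a • allOnes + (b • v₁₂₃₄ + c • v₃₄₅₆)) ≠ 2) a b c

theorem stmt19 :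
    -- (a) the distinguished subspace is a good subspace
    GoodSubspace distinguishedU ∧
    -- (b) any good subspace is carried onto it by a permutation of the ten coordinates
    (∀ U' : Submodule (ZMod 2) (Fin 10 → ZMod 2), GoodSubspace U' →
      ∃ σ : Equiv.Perm (Fin 10),
        Submodule.map (LinearEquiv.funCongrLeft (ZMod 2) (ZMod 2) σ).toLinearMap U' =
          distinguishedU) := by
  refine ⟨distinguishedU_goodSubspace, fun U hU => ?_⟩
  have ⟨h₁, _, hrank, hiso, _⟩ := hU
  obtain ⟨a, ha, -, ha₄⟩ := hU.exists_wt_eq_four {allOnes} (mem_singleton_self _) (by simp)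
  obtain ⟨b, hb, hab, hb₄⟩ :=
    hU.exists_wt_eq_four {allOnes, a} (mem_insert_self _ _) (card_le_two.trans_lt (by norm_num))
  have hab₁ : a + b ∉ span (ZMod 2) {allOnes} := fun h => hab <| by
    have h' := span_mono (s := {allOnes}) (t := ↑({allOnes, a} : Finset _)) (by simp) h
    simpa using sub_mem h' (subset_span (by simp) : a ∈ span (ZMod 2) _)
  have hdot : 2 ∣ wt (a * b) := by
    rw [← ZMod.natCast_eq_zero_iff, ← dotForm_eq_natCast_wt_mul]
    exact hiso a ha b hb
  have hab₂ : wt (a * b) = 2 := by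
    have := wt_add_add_two_mul_wt_mul a b
    have := hU.wt_eq_four_or_six (add_mem ha hb) hab₁
    omega
  obtain ⟨σ, haσ, hbσ⟩ := exists_perm_comp_eq_of_wt_eq v₁₂₃₄ v₃₄₅₆ (x' := a) (y' := b)
    (by rw [ha₄]; decide) (by rw [hb₄]; decide) (by rw [hab₂]; decide)
  refine ⟨σ, (eq_of_le_of_finrank_eq ?_ ?_).symm⟩
  · rw [distinguishedU, span_le]
    rintro _ (rfl | rfl | rfl)
    · exact ⟨allOnes, h₁, rfl⟩
    · exact ⟨a, ha, haσ⟩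
    · exact ⟨b, hb, hbσ⟩
  · rw [LinearEquiv.finrank_map_eq, finrank_distinguishedU, hrank]
end
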